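/- Fix e∈(0,1/2) and define F(A,B) = [H(e+A+B)+H(e−A+B)−2H(e)−2B H'(e)] / (A³−B³)^{2/3} for 0<B<A with e+A+B<1 and e−A+B>0. If e<e₀=(3−√3)/6, then there exist A,B with 0<B<A such that F(A,B) > H''(e). -/

import Mathlib

noncomputable def H (u : ℝ) : ℝ := -(u * Real.log u + (1 - u) * Real.log (1 - u))

/-!
Take `B = c A²` with `c = -H'''(e) / (2 H''(e)) > 0`. A fourth-order Taylor bound for `H` at `e`,
with `H''''` bounded below on `[e - A - B, e + A + B]`, bounds the numerator from below, while
`(A³ - B³)^(2/3) ≥ A² - B³/A`. Both bounds equal `H''(e) A²` up to order `A³`, and with this `c`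
their difference is `A⁴ (H''''(e)/12 - H'''(e)² / (4 H''(e)) + o(1))`. This is positive for small
`A` exactly when `3 H'''(e)² > H''(e) H''''(e)`, which for the binary entropy reads
`6e² - 6e + 1 > 0`, i.e. `e < (3 - √3)/6`.
-/

open Real Set Filter Topology

section SignLemmas

variable {S : Set ℝ} {g g' : ℝ → ℝ} {e x : ℝ}

theorem Set.OrdConnected.exists_hasDerivAt_sub_eq (hS : S.OrdConnected)
    (hg : ∀ y ∈ S, HasDerivAt g (g' y) y) (he : e ∈ S) (hx : x ∈ S) (hxe : x ≠ e) :
    ∃ ξ ∈ S, 0 < (ξ - e) * (x - e) ∧ g x - g e = g' ξ * (x - e) := by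
  have hmvt : ∀ {a b}, a ∈ S → b ∈ S → a < b →
      ∃ ξ ∈ Ioo a b, g b - g a = g' ξ * (b - a) := by
    intro a b ha hb hab
    have hsub := hS.out ha hb
    obtain ⟨ξ, hξ, hslope⟩ := exists_hasDerivAt_eq_slope g g' hab
      (fun y hy => (hg y (hsub hy)).continuousAt.continuousWithinAt)
      (fun y hy => hg y (hsub (Ioo_subset_Icc_self hy)))
    exact ⟨ξ, hξ, by rw [hslope]; field_simp [(sub_pos.2 hab).ne']⟩
  rcases hxe.lt_or_gt with hlt | hgt
  · obtain ⟨ξ, hξ, heq⟩ := hmvt hx he hlt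
    refine ⟨ξ, hS.out hx he (Ioo_subset_Icc_self hξ), ?_, by linarith⟩
    nlinarith [hξ.1, hξ.2]
  · obtain ⟨ξ, hξ, heq⟩ := hmvt he hx hgt
    exact ⟨ξ, hS.out he hx (Ioo_subset_Icc_self hξ), by nlinarith [hξ.1, hξ.2], heq⟩

theorem mul_sub_nonneg_of_hasDerivAt_nonneg (hS : S.OrdConnected)
    (hg : ∀ y ∈ S, HasDerivAt g (g' y) y) (hg' : ∀ y ∈ S, 0 ≤ g' y)
    (he : e ∈ S) (hge : g e = 0) (hx : x ∈ S) : 0 ≤ (x - e) * g x := by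
  rcases eq_or_ne x e with rfl | hxe
  · simp
  obtain ⟨ξ, hξ, -, heq⟩ := hS.exists_hasDerivAt_sub_eq hg he hx hxe
  rw [hge, sub_zero] at heq
  calc 0 ≤ g' ξ * (x - e) ^ 2 := mul_nonneg (hg' ξ hξ) (sq_nonneg _)
    _ = (x - e) * g x := by rw [heq]; ring

theorem nonneg_of_mul_sub_hasDerivAt_nonneg (hS : S.OrdConnected)
    (hg : ∀ y ∈ S, HasDerivAt g (g' y) y) (hg' : ∀ y ∈ S, 0 ≤ (y - e) * g' y)
    (he : e ∈ S) (hge : g e = 0) (hx : x ∈ S) : 0 ≤ g x := by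
  rcases eq_or_ne x e with rfl | hxe
  · exact hge.ge
  obtain ⟨ξ, hξ, hpos, heq⟩ := hS.exists_hasDerivAt_sub_eq hg he hx hxe
  rw [hge, sub_zero] at heq
  have hξe : ξ - e ≠ 0 := by
    rintro h
    rw [h, zero_mul] at hpos
    exact hpos.false
  rw [heq]
  refine (mul_nonneg_iff_of_pos_right (pow_two_pos_of_ne_zero hξe)).mp ?_
  calc 0 ≤ (ξ - e) * g' ξ * ((ξ - e) * (x - e)) := mul_nonneg (hg' ξ hξ) hpos.le
    _ = g' ξ * (x - e) * (ξ - e) ^ 2 := by ring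

end SignLemmas

noncomputable def taylorQuartic (e a₀ a₁ a₂ a₃ a₄ y : ℝ) : ℝ :=
  a₀ + a₁ * (y - e) + a₂ * (y - e) ^ 2 / 2 + a₃ * (y - e) ^ 3 / 6 + a₄ * (y - e) ^ 4 / 24

theorem hasDerivAt_taylorQuartic (e a₀ a₁ a₂ a₃ a₄ y : ℝ) :
    HasDerivAt (taylorQuartic e a₀ a₁ a₂ a₃ a₄) (taylorQuartic e a₁ a₂ a₃ a₄ 0 y) y := by
  have h := (hasDerivAt_id' y).sub_const e
  refine (((((h.const_mul a₁).const_add a₀).fun_add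
    ((h.fun_pow 2).const_mul a₂ |>.div_const 2)).fun_add
    ((h.fun_pow 3).const_mul a₃ |>.div_const 6)).fun_add
    ((h.fun_pow 4).const_mul a₄ |>.div_const 24)).congr_deriv ?_
  simp only [taylorQuartic]
  ring

theorem taylorQuartic_le {S : Set ℝ} {f f₁ f₂ f₃ f₄ : ℝ → ℝ} {m e x : ℝ} (hS : S.OrdConnected)
    (hf : ∀ y ∈ S, HasDerivAt f (f₁ y) y) (hf₁ : ∀ y ∈ S, HasDerivAt f₁ (f₂ y) y)
    (hf₂ : ∀ y ∈ S, HasDerivAt f₂ (f₃ y) y) (hf₃ : ∀ y ∈ S, HasDerivAt f₃ (f₄ y) y)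
    (hm : ∀ y ∈ S, m ≤ f₄ y) (he : e ∈ S) (hx : x ∈ S) :
    taylorQuartic e (f e) (f₁ e) (f₂ e) (f₃ e) m x ≤ f x := by
  -- Each remainder `fₖ - (its Taylor polynomial)` vanishes at `e` and has the next one as
  -- derivative; the last derivative `f₄ - m` is nonnegative.
  have h₃ : ∀ y ∈ S, 0 ≤ (y - e) * (f₃ y - taylorQuartic e (f₃ e) m 0 0 0 y) :=
    fun y hy => mul_sub_nonneg_of_hasDerivAt_nonneg (g := fun z => f₃ z - _) hS
      (fun z hz => (hf₃ z hz).fun_sub (hasDerivAt_taylorQuartic ..))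
      (fun z hz => by simpa [taylorQuartic] using hm z hz) he (by simp [taylorQuartic]) hy
  have h₂ : ∀ y ∈ S, 0 ≤ f₂ y - taylorQuartic e (f₂ e) (f₃ e) m 0 0 y :=
    fun y hy => nonneg_of_mul_sub_hasDerivAt_nonneg (g := fun z => f₂ z - _) hS
      (fun z hz => (hf₂ z hz).fun_sub (hasDerivAt_taylorQuartic ..)) h₃ he
      (by simp [taylorQuartic]) hy
  have h₁ : ∀ y ∈ S, 0 ≤ (y - e) * (f₁ y - taylorQuartic e (f₁ e) (f₂ e) (f₃ e) m 0 y) :=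
    fun y hy => mul_sub_nonneg_of_hasDerivAt_nonneg (g := fun z => f₁ z - _) hS
      (fun z hz => (hf₁ z hz).fun_sub (hasDerivAt_taylorQuartic ..)) h₂ he
      (by simp [taylorQuartic]) hy
  exact sub_nonneg.1 <| nonneg_of_mul_sub_hasDerivAt_nonneg (g := fun z => f z - _) hS
    (fun z hz => (hf z hz).fun_sub (hasDerivAt_taylorQuartic ..)) h₁ he
    (by simp [taylorQuartic]) hx

theorem sq_sub_pow_three_div_le_rpow {A B : ℝ} (hB : 0 ≤ B) (hBA : B ≤ A) :
    A ^ 2 - B ^ 3 / A ≤ (A ^ 3 - B ^ 3) ^ ((2 : ℝ) / 3) := by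
  obtain rfl | hA := (hB.trans hBA).eq_or_lt
  · obtain rfl : B = 0 := le_antisymm hBA hB
    simp
  set t := 1 - (B / A) ^ 3
  have hBA' : (B / A) ^ 3 ≤ 1 := pow_le_one₀ (by positivity) ((div_le_one hA).2 hBA)
  have ht₀ : 0 ≤ t := by linarith
  have ht₁ : t ≤ 1 := by linarith [pow_nonneg (div_nonneg hB hA.le) 3]
  calc A ^ 2 - B ^ 3 / A = A ^ 2 * t := by simp only [t]; field_simp
    _ ≤ A ^ 2 * t ^ ((2 : ℝ) / 3) := by gcongr; exact self_le_rpow_of_le_one ht₀ ht₁ (by norm_num)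
    _ = (A ^ 3 * t) ^ ((2 : ℝ) / 3) := by
      rw [mul_rpow (by positivity) ht₀, ← rpow_natCast A 3, ← rpow_mul hA.le]
      norm_num
    _ = (A ^ 3 - B ^ 3) ^ ((2 : ℝ) / 3) := by simp only [t]; field_simp

theorem eventually_lt_of_mul_lt_three_mul_sq {a₂ a₃ c : ℝ} {m : ℝ → ℝ} (ha₂ : a₂ < 0)
    (hc : 2 * a₂ * c = -a₃) (hm : ContinuousAt m 0) (hm₀ : a₂ * m 0 < 3 * a₃ ^ 2) :
    ∀ᶠ A in 𝓝[>] 0,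
      a₂ * (A ^ 2 - (c * A ^ 2) ^ 3 / A) <
        a₂ * (A ^ 2 + (c * A ^ 2) ^ 2) + a₃ * (3 * A ^ 2 * (c * A ^ 2) + (c * A ^ 2) ^ 3) / 3
          + m (A + c * A ^ 2) * (A ^ 4 + 6 * A ^ 2 * (c * A ^ 2) ^ 2 + (c * A ^ 2) ^ 4) / 12 := by
  -- The two sides differ by `A⁴ Φ A`, and `Φ 0 = m 0 / 12 - a₂ c² > 0`.
  set Φ : ℝ → ℝ := fun A => a₂ * c ^ 2 + a₃ * c + a₃ * c ^ 3 * A ^ 2 / 3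
    + m (A + c * A ^ 2) * (1 + 6 * c ^ 2 * A ^ 2 + c ^ 4 * A ^ 4) / 12 + a₂ * c ^ 3 * A
  have hΦ₀ : 0 < Φ 0 := by
    have : 12 * a₂ * c ^ 2 < m 0 := by
      refine (mul_lt_mul_left_of_neg ha₂).1 ?_
      linear_combination hm₀ + (3 * a₃ - 6 * a₂ * c) * hc
    have hΦ₀' : Φ 0 = a₂ * c ^ 2 + a₃ * c + m 0 / 12 := by simp [Φ]
    rw [hΦ₀']
    linear_combination this / 12 - c * hc
  have hΦ : ContinuousAt Φ 0 := by
    have : ContinuousAt m (0 + c * 0 ^ 2) := by simpa using hm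
    simp only [Φ]
    fun_prop (disch := norm_num)
  filter_upwards [self_mem_nhdsWithin, nhdsWithin_le_nhds (hΦ.eventually (eventually_gt_nhds hΦ₀))]
    with A (hA : 0 < A) hΦA
  have : 0 < A ^ 4 * Φ A := by positivity
  simp only [Φ] at this
  have hdiv : (c * A ^ 2) ^ 3 / A = c ^ 3 * A ^ 5 := by field_simp
  rw [hdiv]
  linear_combination this

theorem H_eq_binEntropy : H = binEntropy := by
  ext u
  simp only [H, binEntropy, log_inv]
  ring

noncomputable def H₁ (u : ℝ) : ℝ := log (1 - u) - log u
noncomputable def H₂ (u : ℝ) : ℝ := -u⁻¹ - (1 - u)⁻¹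
noncomputable def H₃ (u : ℝ) : ℝ := (u ^ 2)⁻¹ - ((1 - u) ^ 2)⁻¹
noncomputable def H₄ (u : ℝ) : ℝ := -2 * (u ^ 3)⁻¹ - 2 * ((1 - u) ^ 3)⁻¹

section Derivatives

variable {u : ℝ}

theorem deriv_H : deriv H = H₁ := by
  ext u
  rw [H_eq_binEntropy, deriv_binEntropy, H₁]

theorem hasDerivAt_H (h₀ : u ≠ 0) (h₁ : u ≠ 1) : HasDerivAt H (H₁ u) u := by
  rw [H_eq_binEntropy]
  exact hasDerivAt_binEntropy h₀ h₁

theorem hasDerivAt_H₁ (h₀ : u ≠ 0) (h₁ : u ≠ 1) : HasDerivAt H₁ (H₂ u) u := by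
  have h₁' : 1 - u ≠ 0 := sub_ne_zero.2 h₁.symm
  have := ((hasDerivAt_id' u).const_sub 1).log h₁' |>.fun_sub (hasDerivAt_log h₀)
  refine this.congr_deriv ?_
  simp only [H₂]
  field_simp
  ring

theorem hasDerivAt_H₂ (h₀ : u ≠ 0) (h₁ : u ≠ 1) : HasDerivAt H₂ (H₃ u) u := by
  have h₁' : 1 - u ≠ 0 := sub_ne_zero.2 h₁.symm
  have := (hasDerivAt_inv h₀).neg.fun_sub (((hasDerivAt_id' u).const_sub 1).inv h₁')
  refine this.congr_deriv ?_
  simp only [H₃]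
  ring

theorem hasDerivAt_H₃ (h₀ : u ≠ 0) (h₁ : u ≠ 1) : HasDerivAt H₃ (H₄ u) u := by
  have h₁' : 1 - u ≠ 0 := sub_ne_zero.2 h₁.symm
  have := ((hasDerivAt_pow 2 u).inv (pow_ne_zero 2 h₀)).fun_sub
    ((((hasDerivAt_id' u).const_sub 1).fun_pow 2).inv (pow_ne_zero 2 h₁'))
  refine this.congr_deriv ?_
  simp only [H₄]
  field_simp
  ring

theorem iteratedDeriv_two_H (h₀ : u ≠ 0) (h₁ : u ≠ 1) : iteratedDeriv 2 H u = H₂ u := by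
  rw [iteratedDeriv_succ, iteratedDeriv_one, deriv_H, (hasDerivAt_H₁ h₀ h₁).deriv]

end Derivatives

noncomputable def H₄Lower (e δ : ℝ) : ℝ := -2 * ((e - δ) ^ 3)⁻¹ - 2 * ((1 - e - δ) ^ 3)⁻¹

theorem H₄Lower_le_H₄ {e δ u : ℝ} (h₀ : 0 < e - δ) (h₁ : e + δ < 1) (hu : u ∈ Icc (e - δ) (e + δ)) :
    H₄Lower e δ ≤ H₄ u := by
  have hu₀ : (u ^ 3)⁻¹ ≤ ((e - δ) ^ 3)⁻¹ :=
    inv_anti₀ (by positivity) (pow_le_pow_left₀ h₀.le hu.1 3)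
  have hu₁ : ((1 - u) ^ 3)⁻¹ ≤ ((1 - e - δ) ^ 3)⁻¹ :=
    inv_anti₀ (pow_pos (by linarith) 3) (pow_le_pow_left₀ (by linarith) (by linarith [hu.2]) 3)
  simp only [H₄Lower, H₄]
  linarith

theorem H_add_add_H_sub_add_ge {e A B : ℝ} (hA : 0 ≤ A) (hB : 0 ≤ B) (he : A + B < e)
    (he' : e + A + B < 1) :
    H₂ e * (A ^ 2 + B ^ 2) + H₃ e * (3 * A ^ 2 * B + B ^ 3) / 3
        + H₄Lower e (A + B) * (A ^ 4 + 6 * A ^ 2 * B ^ 2 + B ^ 4) / 12 ≤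
      H (e + A + B) + H (e - A + B) - 2 * H e - 2 * B * H₁ e := by
  set S := Icc (e - (A + B)) (e + (A + B))
  have hne : ∀ y ∈ S, y ≠ 0 ∧ y ≠ 1 := fun y hy =>
    ⟨by linarith [hy.1], by linarith [hy.2]⟩
  have taylor := fun x (hx : x ∈ S) => taylorQuartic_le ordConnected_Icc
    (fun y hy => hasDerivAt_H (hne y hy).1 (hne y hy).2)
    (fun y hy => hasDerivAt_H₁ (hne y hy).1 (hne y hy).2)
    (fun y hy => hasDerivAt_H₂ (hne y hy).1 (hne y hy).2)
    (fun y hy => hasDerivAt_H₃ (hne y hy).1 (hne y hy).2)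
    (fun y hy => H₄Lower_le_H₄ (by linarith) (by linarith) hy)
    (x := x) (by constructor <;> linarith) hx
  have h_right := taylor (e + A + B) (by constructor <;> linarith)
  have h_left := taylor (e - A + B) (by constructor <;> linarith)
  simp only [taylorQuartic] at h_right h_left
  linear_combination h_right + h_left

theorem continuousAt_H₄Lower {e : ℝ} (h₀ : e ≠ 0) (h₁ : e ≠ 1) : ContinuousAt (H₄Lower e) 0 := by
  have h₁' : 1 - e ≠ 0 := sub_ne_zero.2 h₁.symm
  unfold H₄Lower
  fun_prop (disch := simp [h₀, h₁'])

theorem H₂_neg {u : ℝ} (h₀ : 0 < u) (h₁ : u < 1) : H₂ u < 0 := by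
  have : 0 < 1 - u := by linarith
  simp only [H₂]
  linarith [inv_pos.2 h₀, inv_pos.2 this]

theorem H₃_pos {u : ℝ} (h₀ : 0 < u) (h₁ : u < 1 / 2) : 0 < H₃ u := by
  simp only [H₃, sub_pos]
  exact inv_strictAnti₀ (by positivity) (pow_lt_pow_left₀ (by linarith) h₀.le two_ne_zero)

theorem H₂_mul_H₄_lt_three_mul_H₃_sq {e : ℝ} (h₀ : 0 < e) (he : e < (3 - √3) / 6) :
    H₂ e * H₄ e < 3 * H₃ e ^ 2 := by
  have hsqrt : √3 < 3 - 6 * e := by linarith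
  have hquad : 0 < 6 * e ^ 2 - 6 * e + 1 := by
    nlinarith [sq_sqrt (show (0 : ℝ) ≤ 3 by norm_num), sqrt_nonneg 3]
  have h₁ : 0 < 1 - e := by nlinarith [sqrt_nonneg 3]
  have : 3 * H₃ e ^ 2 - H₂ e * H₄ e = (6 * e ^ 2 - 6 * e + 1) / (e ^ 4 * (1 - e) ^ 4) := by
    simp only [H₂, H₃, H₄]
    field_simp
    ring
  linarith [show 0 < 3 * H₃ e ^ 2 - H₂ e * H₄ e by rw [this]; positivity]

theorem stmt16 (e : ℝ) (he : e ∈ Set.Ioo (0:ℝ) (1/2))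
    (he0 : e < (3 - Real.sqrt 3) / 6) :
    ∃ A B : ℝ, 0 < B ∧ B < A ∧ e + A + B < 1 ∧ 0 < e - A + B ∧
      iteratedDeriv 2 H e <
        (H (e + A + B) + H (e - A + B) - 2 * H e - 2 * B * deriv H e)
          / (A ^ 3 - B ^ 3) ^ ((2:ℝ)/3) := by
  obtain ⟨he₀, he₁⟩ := he
  have hH₂ : H₂ e < 0 := H₂_neg he₀ (by linarith)
  set c := -H₃ e / (2 * H₂ e) with hc
  have hc₀ : 0 < c := div_pos_of_neg_of_neg (neg_neg_of_pos (H₃_pos he₀ he₁)) (by linarith)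
  have hm₀ : H₂ e * H₄Lower e 0 < 3 * H₃ e ^ 2 := by
    simpa [H₄Lower, H₄] using H₂_mul_H₄_lt_three_mul_H₃_sq he₀ he0
  have hgap := eventually_lt_of_mul_lt_three_mul_sq (a₃ := H₃ e) (c := c) hH₂
    (by rw [hc]; field_simp [hH₂.ne])
    (continuousAt_H₄Lower he₀.ne' (by linarith)) hm₀
  have hsmall : ∀ᶠ A in 𝓝 (0 : ℝ), c * A < 1 ∧ A + c * A ^ 2 < e :=
    (ContinuousAt.eventually_lt (by fun_prop) continuousAt_const (by simp)).and
      (ContinuousAt.eventually_lt (by fun_prop) continuousAt_const (by simpa))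
  obtain ⟨A, (hA : 0 < A), hgapA, hcA, hAe⟩ :=
    (eventually_mem_nhdsWithin.and (hgap.and (nhdsWithin_le_nhds hsmall))).exists
  have hB : 0 < c * A ^ 2 := by positivity
  have hBA : c * A ^ 2 < A := by nlinarith
  refine ⟨A, c * A ^ 2, hB, hBA, by linarith, by linarith, ?_⟩
  rw [iteratedDeriv_two_H he₀.ne' (by linarith), deriv_H,
    lt_div_iff₀ (rpow_pos_of_pos (sub_pos.2 (pow_lt_pow_left₀ hBA hB.le three_ne_zero)) _)]
  calc H₂ e * (A ^ 3 - (c * A ^ 2) ^ 3) ^ ((2 : ℝ) / 3)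
      ≤ H₂ e * (A ^ 2 - (c * A ^ 2) ^ 3 / A) :=
        mul_le_mul_of_nonpos_left (sq_sub_pow_three_div_le_rpow hB.le hBA.le) hH₂.le
    _ < _ := hgapA
    _ ≤ _ := H_add_add_H_sub_add_ge hA.le hB.le hAe (by linarith)
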